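/- Let A be a k-algebra and G a finite group acting on A by automorphisms. For each g ∈ G, the map ξ_g: C_•(A; A_g) → C_•(A⋊G) sending a_0 ⊗ a_1 ⊗ ⋯ ⊗ a_m to ((1, g^{-1})·(a_0, 1)) ⊗ (a_1, 1) ⊗ ⋯ ⊗ (a_m, 1) is a chain map, i.e. it commutes with the Hochschild differentials, including the cyclic boundary term. -/

import Mathlib

/-!
On elementary elements of `A ⋊ G` one has `(a, 1)(b, 1) = (ab, 1)` and
`(g⁻¹(a₀), g⁻¹)(a₁, 1) = (g⁻¹(a₀a₁), g⁻¹)`, so `ξ_g` carries every ordinary face to the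
corresponding face. For the cyclic face, moving `(a_{m+1}, 1)` past the leading `g⁻¹` gives
`(a_{m+1}, 1)(g⁻¹(a₀), g⁻¹) = (g⁻¹(g(a_{m+1})a₀), g⁻¹)`, which is exactly the twist by `g` in
`C_•(A; A_g)`.
-/

open scoped TensorProduct
open PiTensorProduct

section

variable (k : Type) [CommRing k] (A : Type) [Ring A] [Algebra k A]
variable (G : Type) [Group G] [Fintype G] [DecidableEq G]
variable (act : G →* (A ≃ₐ[k] A))

/-- The Hochschild-type differential evaluated on an elementary `(m+1)`-tuple:
the alternating sum of the face maps (merging adjacent entries using the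
multiplication `mulB`) together with the cyclic face, in which the last entry
is first twisted by `tw` and then multiplied onto the zeroth entry. -/
noncomputable def tupleD {B : Type} [AddCommGroup B] [Module k B]
    (mulB : B → B → B) (tw : B → B) {m : ℕ} (v : Fin (m + 1) → B) :
    ⨂[k]^m B :=
  (∑ i : Fin m, ((-1 : ℤ) ^ (i : ℕ)) •
      tprod k (fun j : Fin m =>
        if (j : ℕ) < (i : ℕ) then v (Fin.castSucc j)
        else if (j : ℕ) = (i : ℕ) then mulB (v (Fin.castSucc j)) (v (Fin.succ j))
        else v (Fin.succ j)))
  + ((-1 : ℤ) ^ m) •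
      tprod k (fun j : Fin m =>
        if (j : ℕ) = 0 then mulB (tw (v (Fin.last m))) (v 0)
        else v (Fin.castSucc j))

/-- The crossed product `A ⋊ G`, realized as the `k`-module of `A`-valued
functions on `G` (`(a, g)` corresponds to the function `δ_g·a`). -/
abbrev CP : Type := G → A

/-- Multiplication of the crossed product `A ⋊ G`:
`(a, g)·(b, h) = (a·g(b), gh)`, extended bilinearly. -/
def cpMul (x y : CP A G) : CP A G :=
  fun h => ∑ p ∈ Finset.univ.filter (fun p : G × G => p.1 * p.2 = h),
    x p.1 * act p.1 (y p.2)

/-- The elementary element `(a, g)` of the crossed product `A ⋊ G`. -/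
def cpOf (a : A) (g : G) : CP A G := fun h => if h = g then a else 0

/-- The map `ξ_g` on an elementary `g`-twisted Hochschild chain:
`a_0 ⊗ a_1 ⊗ ⋯ ⊗ a_m ↦ ((1, g⁻¹)·(a_0, 1)) ⊗ (a_1, 1) ⊗ ⋯ ⊗ (a_m, 1)`,
where `(1, g⁻¹)·(a_0, 1) = (g⁻¹(a_0), g⁻¹)`. -/
def xiTup (g : G) {m : ℕ} (a : Fin (m + 1) → A) : Fin (m + 1) → CP A G :=
  fun j => if (j : ℕ) = 0 then cpOf A G (act g⁻¹ (a 0)) g⁻¹ else cpOf A G (a j) 1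

/-- The `i`-th face of an elementary `g`-twisted chain of `A`. -/
def twFace {m : ℕ} (i : Fin (m + 1)) (a : Fin (m + 2) → A) : Fin (m + 1) → A :=
  fun j =>
    if (j : ℕ) < (i : ℕ) then a (Fin.castSucc j)
    else if (j : ℕ) = (i : ℕ) then a (Fin.castSucc j) * a (Fin.succ j)
    else a (Fin.succ j)

/-- The cyclic face of an elementary `g`-twisted chain of `A`:
`a_0 ⊗ ⋯ ⊗ a_{m+1} ↦ (g(a_{m+1})·a_0) ⊗ a_1 ⊗ ⋯ ⊗ a_m`. -/
def twCyc (g : G) {m : ℕ} (a : Fin (m + 2) → A) : Fin (m + 1) → A :=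
  fun j =>
    if (j : ℕ) = 0 then act g (a (Fin.last (m + 1))) * a 0
    else a (Fin.castSucc j)

end

section

variable {k : Type} [CommRing k] {A : Type} [Ring A] [Algebra k A]
variable {G : Type} [Group G] [DecidableEq G]
variable (act : G →* (A ≃ₐ[k] A))

lemma xiTup_zero (g : G) {m : ℕ} (a : Fin (m + 1) → A) :
    xiTup k A G act g a 0 = cpOf A G (act g⁻¹ (a 0)) g⁻¹ :=
  if_pos rfl

lemma xiTup_of_ne_zero (g : G) {m : ℕ} (a : Fin (m + 1) → A) {j : Fin (m + 1)} (hj : j ≠ 0) :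
    xiTup k A G act g a j = cpOf A G (a j) 1 :=
  if_neg (Fin.val_ne_zero_iff.mpr hj)

variable [Fintype G]

lemma cpMul_cpOf (a b : A) (g h : G) :
    cpMul k A G act (cpOf A G a g) (cpOf A G b h) = cpOf A G (a * act g b) (g * h) := by
  funext x
  rw [cpMul, Finset.sum_filter, Fintype.sum_eq_single (g, h)]
  · simp only [cpOf]
    split_ifs <;> simp_all [eq_comm]
  · rintro ⟨p, q⟩ hpq
    by_cases hp : p = g
    · subst hp
      have hq : q ≠ h := by simpa using hpq
      simp [cpOf, hq]
    · simp [cpOf, hp]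

lemma xiTup_twFace (g : G) {m : ℕ} (a : Fin (m + 2) → A) (i : Fin (m + 1)) :
    xiTup k A G act g (twFace A i a) = fun j : Fin (m + 1) =>
      if (j : ℕ) < i then xiTup k A G act g a j.castSucc
      else if (j : ℕ) = i then
        cpMul k A G act (xiTup k A G act g a j.castSucc) (xiTup k A G act g a j.succ)
      else xiTup k A G act g a j.succ := by
  funext j
  rcases eq_or_ne j 0 with rfl | hj
  · rw [xiTup_zero, xiTup_of_ne_zero act g a (Fin.succ_ne_zero 0)]
    rcases eq_or_ne i 0 with rfl | hi
    · simp [twFace, xiTup_zero, cpMul_cpOf]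
    · have hi : (0 : ℕ) < i := Fin.pos_iff_ne_zero.mpr hi
      simp [twFace, hi, xiTup_zero]
  · have hj' : j.castSucc ≠ 0 := Fin.castSucc_ne_zero_iff.mpr hj
    rw [xiTup_of_ne_zero act g _ hj, xiTup_of_ne_zero act g a hj',
      xiTup_of_ne_zero act g a (Fin.succ_ne_zero j), twFace]
    split_ifs <;> simp [cpMul_cpOf]

lemma xiTup_twCyc (g : G) {m : ℕ} (a : Fin (m + 2) → A) :
    xiTup k A G act g (twCyc k A G act g a) = fun j : Fin (m + 1) =>
      if (j : ℕ) = 0 then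
        cpMul k A G act (xiTup k A G act g a (Fin.last (m + 1))) (xiTup k A G act g a 0)
      else xiTup k A G act g a j.castSucc := by
  funext j
  rcases eq_or_ne j 0 with rfl | hj
  · rw [xiTup_of_ne_zero act g a (Fin.last_pos.ne')]
    simp [twCyc, xiTup_zero, cpMul_cpOf]
  · have hj' : j.castSucc ≠ 0 := Fin.castSucc_ne_zero_iff.mpr hj
    have hj0 : (j : ℕ) ≠ 0 := Fin.val_ne_zero_iff.mpr hj
    rw [xiTup_of_ne_zero act g _ hj, xiTup_of_ne_zero act g a hj', twCyc, if_neg hj0, if_neg hj0]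

end

section

variable (k : Type) [CommRing k] (A : Type) [Ring A] [Algebra k A]
variable (G : Type) [Group G] [Fintype G] [DecidableEq G]
variable (act : G →* (A ≃ₐ[k] A))

/-- For each `g ∈ G`, the map `ξ_g : C_•(A; A_g) → C_•(A ⋊ G)` is a chain map:
on every elementary chain `a`, applying `ξ_g` to the `g`-twisted Hochschild
differential of `a` (including the cyclic boundary term) agrees with the
Hochschild differential of `A ⋊ G` applied to `ξ_g(a)`. -/
theorem xi_chain_map (g : G) (m : ℕ) (a : Fin (m + 2) → A) :
    ((∑ i : Fin (m + 1), ((-1 : ℤ) ^ (i : ℕ)) •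
        tprod k (xiTup k A G act g (twFace A i a)))
      + ((-1 : ℤ) ^ (m + 1)) • tprod k (xiTup k A G act g (twCyc k A G act g a)))
    = tupleD k (cpMul k A G act) id (xiTup k A G act g a) := by
  simp only [tupleD, xiTup_twFace, xiTup_twCyc, id]

end
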